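/- arXiv:0903.5167 — 2 statements merged into one kernel-verified Lean document; each statement's English description precedes it below -/
import Mathlib

section
/- Let K be an infinite compact subset of ℂ. For k ≥ 1 let Y_k(K) := inf{ sup_{z ∈ K} |p(z)| : p a monic polynomial over ℂ of degree k }, and for k ≥ 2 let T_k(K) := sup{ ∏_{1 ≤ i < j ≤ k} |x_i − x_j| : x_1, …, x_k ∈ K }. Then there exists a real number c ≥ 0 such that Y_k(K)^{1/k} → c as k → ∞ and T_k(K)^{1/\binom{k}{2}} → c as k → ∞; in particular the Chebyshev constant C(K) := lim_k Y_k(K)^{1/k} and the transfinite diameter T(K) := lim_k T_k(K)^{1/\binom{k}{2}} both exist and are equal. -/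
/-!
For Fekete points `ξ` (maximisers of `∏_{i<j} |x_i - x_j|` on `Kⁿ`) and each `i`, the monic
polynomial `∏_{j ≠ i} (X - ξ_j)` has sup norm on `K` at most `∏_{j ≠ i} |ξ_i - ξ_j|`, because
moving `ξ_i` to another point of `K` cannot increase the product. Multiplying over `i` gives
`Y_{n-1}ⁿ ≤ T_n²`, that is `Y_{n-1}^{1/(n-1)} ≤ T_n^{1/C(n,2)}`.

Conversely, for any monic `q` of degree `m` the Vandermonde determinant may be computed in the
monic basis `X^{j mod m} q^{⌊j/m⌋}`, whose `j`-th member is bounded on `K` by `F · ‖q‖_K^{j/m}`.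
Expanding the determinant gives `T_n ≤ n! Fⁿ ‖q‖_K^{C(n,2)/m}`, so
`limsup T_n^{1/C(n,2)} ≤ ‖q‖_K^{1/m}` and hence `≤ Y_m^{1/m}`. Both sequences are thus squeezed
onto `limsup T_n^{1/C(n,2)}`.
-/

open Set Filter Polynomial

/-- The `k`-th Chebyshev quantity `Y_k(K)`: the infimum over monic polynomials of degree
`k` of the sup of `|p|` on `K`. -/
noncomputable def chebY (K : Set ℂ) (k : ℕ) : ℝ :=
  sInf {y : ℝ | ∃ p : Polynomial ℂ, p.Monic ∧ p.natDegree = k ∧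
    y = sSup ((fun z => ‖p.eval z‖) '' K)}

/-- The `k`-th diameter quantity `T_k(K)`: the supremum over `k`-tuples of points of `K`
of the product of their mutual distances. -/
noncomputable def diamT (K : Set ℂ) (k : ℕ) : ℝ :=
  sSup {y : ℝ | ∃ x : Fin k → ℂ, (∀ i, x i ∈ K) ∧
    y = ∏ i, ∏ j ∈ Finset.univ.filter (fun j => i < j), ‖x i - x j‖}

open scoped Topology

namespace Finset

variable {ι M : Type*} [CommMonoid M]

theorem prod_prod_Ioi_sq [Fintype ι] [LinearOrder ι] [LocallyFiniteOrderTop ι]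
    [LocallyFiniteOrderBot ι] {g : ι → ι → M} (hg : ∀ i j, g i j = g j i) :
    (∏ i, ∏ j ∈ Ioi i, g i j) ^ 2 = ∏ i, ∏ j ∈ univ.erase i, g i j := by
  have hswap : ∏ i, ∏ j ∈ Ioi i, g i j = ∏ i, ∏ j ∈ Iio i, g i j := by
    rw [prod_comm' (t' := univ) (s' := fun j => Iio j) (by simp)]
    exact prod_congr rfl fun i _ => prod_congr rfl fun j _ => hg j i
  rw [sq]
  nth_rewrite 2 [hswap]
  rw [← prod_mul_distrib]
  refine prod_congr rfl fun i _ => ?_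
  rw [← prod_disjUnion (disjoint_Ioi_Iio i), Ioi_disjUnion_Iio, compl_singleton]

theorem prod_prod_erase_eq_sq_mul [Fintype ι] [DecidableEq ι] {g : ι → ι → M}
    (hg : ∀ i j, g i j = g j i) (i : ι) :
    ∏ a, ∏ b ∈ univ.erase a, g a b =
      (∏ b ∈ univ.erase i, g i b) ^ 2 *
        ∏ a ∈ univ.erase i, ∏ b ∈ (univ.erase a).erase i, g a b := by
  have hsplit : ∀ a ∈ univ.erase i,
      ∏ b ∈ univ.erase a, g a b = g i a * ∏ b ∈ (univ.erase a).erase i, g a b := fun a ha => by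
    rw [hg, mul_prod_erase _ _ (mem_erase.2 ⟨ne_of_mem_erase ha |>.symm, mem_univ i⟩)]
  rw [← mul_prod_erase univ _ (mem_univ i), prod_congr rfl hsplit, prod_mul_distrib, sq, mul_assoc]

end Finset

namespace Matrix

variable {n R S : Type*} [Fintype n] [DecidableEq n] [CommRing R] [Nontrivial R]
  [CommRing S] [LinearOrder S] [IsStrictOrderedRing S]

theorem det_le_factorial_mul_prod {A : Matrix n n R} {abv : AbsoluteValue R S} {c : n → S}
    (hc : ∀ i j, abv (A i j) ≤ c j) :
    abv A.det ≤ (Fintype.card n).factorial • ∏ j, c j :=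
  calc
    abv A.det ≤ ∑ σ : Equiv.Perm n, abv (Equiv.Perm.sign σ • ∏ j, A (σ j) j) := by
      rw [det_apply]; exact abv.sum_le _ _
    _ = ∑ σ : Equiv.Perm n, ∏ j, abv (A (σ j) j) :=
      Finset.sum_congr rfl fun σ _ => by rw [abv.map_units_int_smul, abv.map_prod]
    _ ≤ ∑ _σ : Equiv.Perm n, ∏ j, c j := by
      gcongr with σ _ j
      exact hc _ _
    _ = (Fintype.card n).factorial • ∏ j, c j := by simp [Fintype.card_perm]

end Matrix

noncomputable def supNormOn (K : Set ℂ) (p : ℂ[X]) : ℝ :=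
  sSup ((fun z => ‖p.eval z‖) '' K)

section supNormOn

variable {K : Set ℂ} {p : ℂ[X]}

theorem supNormOn_nonneg : 0 ≤ supNormOn K p :=
  Real.sSup_nonneg <| by rintro _ ⟨z, -, rfl⟩; exact norm_nonneg _

theorem norm_eval_le_supNormOn (hK : IsCompact K) {z : ℂ} (hz : z ∈ K) :
    ‖p.eval z‖ ≤ supNormOn K p :=
  le_csSup (hK.image (continuous_norm.comp p.continuous)).bddAbove ⟨z, hz, rfl⟩

theorem supNormOn_le {c : ℝ} (hc : 0 ≤ c) (h : ∀ z ∈ K, ‖p.eval z‖ ≤ c) : supNormOn K p ≤ c :=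
  Real.sSup_le (by rintro _ ⟨z, hz, rfl⟩; exact h z hz) hc

theorem supNormOn_pos (hK : IsCompact K) (hKi : K.Infinite) (hp : p ≠ 0) : 0 < supNormOn K p := by
  obtain ⟨z, hzK, hz⟩ : ∃ z ∈ K, ¬p.IsRoot z :=
    not_subset.1 fun h => hKi ((finite_setOfPred_isRoot hp).subset h)
  exact (norm_pos_iff.2 hz).trans_le (norm_eval_le_supNormOn hK hzK)

end supNormOn

section chebY

variable {K : Set ℂ} {k : ℕ}

theorem chebY_nonneg : 0 ≤ chebY K k :=
  Real.sInf_nonneg <| by rintro _ ⟨p, -, -, rfl⟩; exact supNormOn_nonneg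

theorem chebY_le_supNormOn {p : ℂ[X]} (hp : p.Monic) (hk : p.natDegree = k) :
    chebY K k ≤ supNormOn K p :=
  csInf_le ⟨0, by rintro _ ⟨q, -, -, rfl⟩; exact supNormOn_nonneg⟩ ⟨p, hp, hk, rfl⟩

theorem le_chebY {c : ℝ} (h : ∀ p : ℂ[X], p.Monic → p.natDegree = k → c ≤ supNormOn K p) :
    c ≤ chebY K k :=
  le_csInf ⟨_, X ^ k, monic_X_pow k, natDegree_X_pow k, rfl⟩ <| by
    rintro _ ⟨p, hp, hk, rfl⟩; exact h p hp hk

end chebY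

noncomputable def pairDistProd {n : ℕ} (x : Fin n → ℂ) : ℝ :=
  ∏ i, ∏ j ∈ Finset.univ.filter (fun j => i < j), ‖x i - x j‖

theorem pairDistProd_nonneg {n : ℕ} (x : Fin n → ℂ) : 0 ≤ pairDistProd x :=
  Finset.prod_nonneg fun _ _ => Finset.prod_nonneg fun _ _ => norm_nonneg _

theorem continuous_pairDistProd {n : ℕ} : Continuous (pairDistProd (n := n)) :=
  continuous_finsetProd _ fun i _ => continuous_finsetProd _ fun j _ =>
    ((continuous_apply i).sub (continuous_apply j)).norm

theorem pairDistProd_eq_norm_det_vandermonde {n : ℕ} (x : Fin n → ℂ) :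
    pairDistProd x = ‖(Matrix.vandermonde x).det‖ := by
  simp only [pairDistProd, Matrix.det_vandermonde, norm_prod, Finset.filter_lt_eq_Ioi,
    norm_sub_rev]

theorem sq_pairDistProd {n : ℕ} (x : Fin n → ℂ) :
    pairDistProd x ^ 2 = ∏ i, ∏ j ∈ Finset.univ.erase i, ‖x i - x j‖ := by
  simp only [pairDistProd, Finset.filter_lt_eq_Ioi]
  exact Finset.prod_prod_Ioi_sq fun i j => norm_sub_rev _ _

section diamT

variable {K : Set ℂ} {n : ℕ}

theorem diamT_nonneg : 0 ≤ diamT K n :=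
  Real.sSup_nonneg <| by rintro _ ⟨x, -, rfl⟩; exact pairDistProd_nonneg x

theorem diamT_le_of_forall {c : ℝ} (hc : 0 ≤ c)
    (h : ∀ x : Fin n → ℂ, (∀ i, x i ∈ K) → pairDistProd x ≤ c) : diamT K n ≤ c :=
  Real.sSup_le (by rintro _ ⟨x, hx, rfl⟩; exact h x hx) hc

theorem exists_pairDistProd_eq_diamT (hK : IsCompact K) (hne : K.Nonempty) (n : ℕ) :
    ∃ ξ : Fin n → ℂ, (∀ i, ξ i ∈ K) ∧ pairDistProd ξ = diamT K n ∧
      ∀ x : Fin n → ℂ, (∀ i, x i ∈ K) → pairDistProd x ≤ diamT K n := by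
  have hpi : IsCompact (univ.pi fun _ : Fin n => K) := isCompact_univ_pi fun _ => hK
  obtain ⟨ξ, hξ, hmax⟩ := hpi.exists_isMaxOn (univ_pi_nonempty_iff.2 fun _ => hne)
    continuous_pairDistProd.continuousOn
  have hξK : ∀ i, ξ i ∈ K := fun i => hξ i (mem_univ i)
  have hdiam : diamT K n = pairDistProd ξ :=
    IsGreatest.csSup_eq ⟨⟨ξ, hξK, rfl⟩, by
      rintro _ ⟨x, hx, rfl⟩; exact hmax (fun i _ => hx i)⟩
  exact ⟨ξ, hξK, hdiam.symm, fun x hx => hdiam ▸ hmax fun i _ => hx i⟩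

theorem diamT_pos (hK : IsCompact K) (hKi : K.Infinite) (n : ℕ) : 0 < diamT K n := by
  let x : Fin n → ℂ := fun i => hKi.natEmbedding _ i
  have hx : Function.Injective x := fun i j h =>
    Fin.val_injective ((hKi.natEmbedding _).injective (Subtype.val_injective h))
  obtain ⟨-, -, -, hle⟩ := exists_pairDistProd_eq_diamT hK hKi.nonempty n
  refine lt_of_lt_of_le ?_ (hle x fun i => (hKi.natEmbedding _ i).2)
  refine Finset.prod_pos fun i _ => Finset.prod_pos fun j hj => ?_
  exact norm_pos_iff.2 (sub_ne_zero.2 (hx.ne (Finset.mem_filter.1 hj).2.ne))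

end diamT

section fekete

variable {K : Set ℂ} {m : ℕ}

theorem chebY_le_prod_erase_of_isMax (hK : IsCompact K) (hKi : K.Infinite)
    {ξ : Fin (m + 1) → ℂ} (hξK : ∀ i, ξ i ∈ K) (hξ : pairDistProd ξ = diamT K (m + 1))
    (hmax : ∀ x : Fin (m + 1) → ℂ, (∀ i, x i ∈ K) → pairDistProd x ≤ diamT K (m + 1))
    (i : Fin (m + 1)) :
    chebY K m ≤ ∏ j ∈ Finset.univ.erase i, ‖ξ i - ξ j‖ := by
  set R := ∏ a ∈ Finset.univ.erase i, ∏ b ∈ (Finset.univ.erase a).erase i, ‖ξ a - ξ b‖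
  have hsplit : ∀ z, pairDistProd (Function.update ξ i z) ^ 2 =
      (∏ j ∈ Finset.univ.erase i, ‖z - ξ j‖) ^ 2 * R := fun z => by
    rw [sq_pairDistProd, Finset.prod_prod_erase_eq_sq_mul (fun a b => norm_sub_rev _ _) i]
    congr 1
    · refine congrArg (· ^ 2) (Finset.prod_congr rfl fun j hj => ?_)
      rw [Function.update_self, Function.update_of_ne (Finset.ne_of_mem_erase hj)]
    · refine Finset.prod_congr rfl fun a ha => ?_
      refine Finset.prod_congr rfl fun b hb => ?_
      rw [Function.update_of_ne (Finset.ne_of_mem_erase ha),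
        Function.update_of_ne (Finset.ne_of_mem_erase hb)]
  have hξsplit := hsplit (ξ i)
  rw [Function.update_eq_self, hξ] at hξsplit
  have hR : 0 < R := by
    have hpos := pow_pos (diamT_pos hK hKi (m + 1)) 2
    rw [hξsplit] at hpos
    exact pos_of_mul_pos_right hpos (by positivity)
  set q : ℂ[X] := ∏ j ∈ Finset.univ.erase i, (X - C (ξ j))
  have hq : q.Monic := monic_prod_of_monic _ _ fun j _ => monic_X_sub_C (ξ j)
  have hqdeg : q.natDegree = m := by simp [q]
  refine (chebY_le_supNormOn hq hqdeg).trans <|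
    supNormOn_le (Finset.prod_nonneg fun _ _ => norm_nonneg _) fun z hz => ?_
  have hupd : ∀ j, Function.update ξ i z j ∈ K := fun j => by
    rcases eq_or_ne j i with rfl | hj
    · rwa [Function.update_self]
    · rw [Function.update_of_ne hj]; exact hξK j
  have hle := pow_le_pow_left₀ (pairDistProd_nonneg _) (hmax _ hupd) 2
  rw [hsplit, hξsplit, mul_le_mul_iff_left₀ hR, pow_le_pow_iff_left₀ (by positivity)
    (by positivity) two_ne_zero] at hle
  simpa [q, eval_prod, norm_prod] using hle

theorem chebY_pow_le_diamT_sq (hK : IsCompact K) (hKi : K.Infinite) (m : ℕ) :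
    chebY K m ^ (m + 1) ≤ diamT K (m + 1) ^ 2 := by
  obtain ⟨ξ, hξK, hξ, hmax⟩ := exists_pairDistProd_eq_diamT hK hKi.nonempty (m + 1)
  calc chebY K m ^ (m + 1) = ∏ _i : Fin (m + 1), chebY K m := by simp
    _ ≤ ∏ i, ∏ j ∈ Finset.univ.erase i, ‖ξ i - ξ j‖ :=
      Finset.prod_le_prod (fun _ _ => chebY_nonneg) fun i _ =>
        chebY_le_prod_erase_of_isMax hK hKi hξK hξ hmax i
    _ = diamT K (m + 1) ^ 2 := by rw [← sq_pairDistProd, hξ]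

end fekete

namespace Polynomial

variable {R : Type*} [Semiring R] {q : R[X]} {m : ℕ}

theorem monic_X_pow_mod_mul_pow_div (hq : q.Monic) (j : ℕ) : (X ^ (j % m) * q ^ (j / m)).Monic :=
  (monic_X_pow _).mul (hq.pow _)

theorem natDegree_X_pow_mod_mul_pow_div [Nontrivial R] (hq : q.Monic) (hqm : q.natDegree = m)
    (j : ℕ) : (X ^ (j % m) * q ^ (j / m)).natDegree = j := by
  rw [(monic_X_pow _).natDegree_mul (hq.pow _), natDegree_X_pow, hq.natDegree_pow, hqm,
    mul_comm, Nat.mod_add_div]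

end Polynomial

theorem norm_eval_X_pow_mod_mul_pow_div_le {q : ℂ[X]} {m : ℕ} (hm : 0 < m) (j : ℕ) {z : ℂ}
    {t G : ℝ} (ht : 0 ≤ t) (hG : 1 ≤ G) (hqz : ‖q.eval z‖ ≤ t ^ m) (hz : ‖z‖ ≤ G * t) :
    ‖(X ^ (j % m) * q ^ (j / m)).eval z‖ ≤ G ^ m * t ^ j :=
  calc ‖(X ^ (j % m) * q ^ (j / m)).eval z‖ = ‖z‖ ^ (j % m) * ‖q.eval z‖ ^ (j / m) := by simp
    _ ≤ (G * t) ^ (j % m) * (t ^ m) ^ (j / m) := by gcongr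
    _ = G ^ (j % m) * t ^ j := by rw [mul_pow, ← pow_mul, mul_assoc, ← pow_add, Nat.mod_add_div]
    _ ≤ G ^ m * t ^ j := by gcongr; exact (Nat.mod_lt j hm).le

theorem Fin.prod_mul_pow_val {M : Type*} [CommMonoid M] (c t : M) (n : ℕ) :
    ∏ j : Fin n, c * t ^ (j : ℕ) = c ^ n * t ^ n.choose 2 := by
  rw [Finset.prod_mul_distrib, Finset.prod_const, Finset.card_univ, Fintype.card_fin,
    Finset.prod_pow_eq_pow_sum, Fin.sum_univ_eq_sum_range (fun j => j), Finset.sum_range_id,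
    Nat.choose_two_right]

theorem diamT_le {K : Set ℂ} {m : ℕ} (hm : 0 < m) {q : ℂ[X]} (hq : q.Monic)
    (hqm : q.natDegree = m) {t G : ℝ} (ht : 0 ≤ t) (hG : 1 ≤ G)
    (hqt : ∀ z ∈ K, ‖q.eval z‖ ≤ t ^ m) (hKt : ∀ z ∈ K, ‖z‖ ≤ G * t) (n : ℕ) :
    diamT K n ≤ n.factorial * (G ^ m) ^ n * t ^ n.choose 2 := by
  refine diamT_le_of_forall (by positivity) fun x hx => ?_
  let p : Fin n → ℂ[X] := fun j => X ^ ((j : ℕ) % m) * q ^ ((j : ℕ) / m)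
  have hdet := Matrix.det_eval_matrixOfPolynomials_eq_det_vandermonde x p
    (fun j => natDegree_X_pow_mod_mul_pow_div hq hqm j) (fun j => monic_X_pow_mod_mul_pow_div hq j)
  have hbound := Matrix.det_le_factorial_mul_prod
    (A := Matrix.of fun i j => (p j).eval (x i)) (abv := IsAbsoluteValue.toAbsoluteValue norm)
    (c := fun j : Fin n => G ^ m * t ^ (j : ℕ))
    fun i j => norm_eval_X_pow_mod_mul_pow_div_le hm j ht hG (hqt _ (hx i)) (hKt _ (hx i))
  rw [Fin.prod_mul_pow_val, Fintype.card_fin, nsmul_eq_mul, ← mul_assoc] at hbound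
  rw [pairDistProd_eq_norm_det_vandermonde, hdet]
  exact hbound

open Real in
theorem log_factorial_mul_pow_le {F : ℝ} (hF : 1 ≤ F) {n : ℕ} (hn : 1 ≤ n) :
    log ((n.factorial : ℝ) * F ^ n) ≤ n * (log n + log F) := by
  have hn0 : (0 : ℝ) < n := by exact_mod_cast hn
  calc log ((n.factorial : ℝ) * F ^ n) ≤ log (((n : ℝ) * F) ^ n) := by
        refine log_le_log (by positivity) ?_
        rw [mul_pow]
        gcongr
        exact_mod_cast n.factorial_le_pow
    _ = n * (log n + log F) := by rw [log_pow, log_mul hn0.ne' (by positivity)]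

open Real in
theorem tendsto_factorial_mul_pow_rpow_inv_choose_two {F : ℝ} (hF : 1 ≤ F) :
    Tendsto (fun n : ℕ => ((n.factorial : ℝ) * F ^ n) ^ ((n.choose 2 : ℝ)⁻¹)) atTop (𝓝 1) := by
  have hbound : Tendsto (fun x : ℝ => 2 * (log x / (x - 1)) + 2 * log F * (1 / (x - 1)))
      atTop (𝓝 0) := by
    simpa [sub_eq_add_neg] using
      ((tendsto_pow_log_div_mul_add_atTop 1 (-1) 1 one_ne_zero).const_mul 2).add
        ((tendsto_pow_log_div_mul_add_atTop 1 (-1) 0 one_ne_zero).const_mul (2 * log F))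
  have hlog : Tendsto (fun n : ℕ => log ((n.factorial : ℝ) * F ^ n) * (n.choose 2 : ℝ)⁻¹)
      atTop (𝓝 0) := by
    refine tendsto_of_tendsto_of_tendsto_of_le_of_le' tendsto_const_nhds
      (hbound.comp tendsto_natCast_atTop_atTop) (Eventually.of_forall fun n => ?_) ?_
    · have : (1 : ℝ) ≤ n.factorial * F ^ n :=
        one_le_mul_of_one_le_of_one_le (by exact_mod_cast n.factorial_pos) (one_le_pow₀ hF)
      exact mul_nonneg (log_nonneg this) (by positivity)
    filter_upwards [eventually_ge_atTop 2] with n hn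
    have hn1 : (1 : ℝ) < n := by exact_mod_cast hn
    calc log ((n.factorial : ℝ) * F ^ n) * (n.choose 2 : ℝ)⁻¹
        ≤ n * (log n + log F) * (n * (n - 1) / 2 : ℝ)⁻¹ := by
          rw [Nat.cast_choose_two]
          gcongr
          exact log_factorial_mul_pow_le hF (by omega)
      _ = 2 * (log n / (n - 1)) + 2 * log F * (1 / (n - 1)) := by
          have : (n : ℝ) - 1 ≠ 0 := by linarith
          field_simp
  have hexp := (continuous_exp.tendsto 0).comp hlog
  rw [exp_zero] at hexp
  refine hexp.congr fun n => ?_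
  rw [Function.comp_apply, rpow_def_of_pos]
  exact mul_pos (by exact_mod_cast n.factorial_pos) (by positivity)

theorem tendsto_limsup_of_limsup_le_of_le_succ {a b : ℕ → ℝ}
    (hb : IsBoundedUnder (· ≤ ·) atTop b) (hb' : IsBoundedUnder (· ≥ ·) atTop b)
    (hba : ∀ᶠ m in atTop, limsup b atTop ≤ a m) (hab : ∀ᶠ m in atTop, a m ≤ b (m + 1)) :
    Tendsto b atTop (𝓝 (limsup b atTop)) ∧ Tendsto a atTop (𝓝 (limsup b atTop)) := by
  obtain ⟨N, hN⟩ := eventually_atTop.1 (hba.and hab)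
  have hliminf : limsup b atTop ≤ liminf b atTop := by
    refine le_liminf_of_le hb.isCoboundedUnder_ge (eventually_atTop.2 ⟨N + 1, fun n hn => ?_⟩)
    obtain ⟨m, rfl⟩ : ∃ m, n = m + 1 := ⟨n - 1, by omega⟩
    exact (hN m (by omega)).1.trans (hN m (by omega)).2
  have hbL : Tendsto b atTop (𝓝 (limsup b atTop)) :=
    tendsto_of_liminf_eq_limsup (le_antisymm (liminf_le_limsup hb hb') hliminf) rfl hb hb'
  exact ⟨hbL, tendsto_of_tendsto_of_tendsto_of_le_of_le' tendsto_const_nhds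
    (hbL.comp (tendsto_add_atTop_nat 1)) hba hab⟩

theorem limsup_le_of_le_mul_of_tendsto_one {b u : ℕ → ℝ} {c : ℝ}
    (hb : IsBoundedUnder (· ≥ ·) atTop b) (hu : Tendsto u atTop (𝓝 1))
    (hbu : ∀ᶠ n in atTop, b n ≤ u n * c) : limsup b atTop ≤ c := by
  have huc : Tendsto (fun n => u n * c) atTop (𝓝 c) := by simpa using hu.mul_const c
  calc limsup b atTop ≤ limsup (fun n => u n * c) atTop :=
        limsup_le_limsup hbu hb.isCoboundedUnder_le huc.isBoundedUnder_le
    _ = c := huc.limsup_eq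

noncomputable def normalizedChebY (K : Set ℂ) (k : ℕ) : ℝ :=
  chebY K k ^ ((k : ℝ)⁻¹)

noncomputable def normalizedDiamT (K : Set ℂ) (k : ℕ) : ℝ :=
  diamT K k ^ ((k.choose 2 : ℝ)⁻¹)

section asymptotics

variable {K : Set ℂ}

theorem normalizedChebY_nonneg (n : ℕ) : 0 ≤ normalizedChebY K n :=
  Real.rpow_nonneg chebY_nonneg _

theorem normalizedDiamT_nonneg (n : ℕ) : 0 ≤ normalizedDiamT K n :=
  Real.rpow_nonneg diamT_nonneg _

theorem le_normalizedChebY {c : ℝ} {m : ℕ} (hm : 0 < m)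
    (h : ∀ p : ℂ[X], p.Monic → p.natDegree = m → c ≤ supNormOn K p ^ ((m : ℝ)⁻¹)) :
    c ≤ normalizedChebY K m := by
  rcases lt_or_ge c 0 with hc | hc
  · exact hc.le.trans (normalizedChebY_nonneg m)
  have hm' : (0 : ℝ) < m := by exact_mod_cast hm
  rw [normalizedChebY, Real.le_rpow_inv_iff_of_pos hc chebY_nonneg hm']
  exact le_chebY fun p hp hpm =>
    (Real.le_rpow_inv_iff_of_pos hc supNormOn_nonneg hm').1 (h p hp hpm)

theorem normalizedChebY_le_normalizedDiamT_succ (hK : IsCompact K) (hKi : K.Infinite)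
    {m : ℕ} (hm : 0 < m) : normalizedChebY K m ≤ normalizedDiamT K (m + 1) := by
  have hN : m * (m + 1) ≠ 0 := by positivity
  have hm' : (m : ℝ) ≠ 0 := by exact_mod_cast hm.ne'
  rw [← pow_le_pow_iff_left₀ (normalizedChebY_nonneg _) (normalizedDiamT_nonneg _) hN]
  have hY : normalizedChebY K m ^ (m * (m + 1)) = chebY K m ^ (m + 1) := by
    rw [normalizedChebY, ← Real.rpow_natCast, ← Real.rpow_mul chebY_nonneg, ← Real.rpow_natCast]
    congr 1
    field_simp
    push_cast
    ring
  have hT : normalizedDiamT K (m + 1) ^ (m * (m + 1)) = diamT K (m + 1) ^ 2 := by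
    rw [normalizedDiamT, ← Real.rpow_natCast, ← Real.rpow_mul diamT_nonneg, ← Real.rpow_natCast]
    congr 1
    rw [Nat.cast_choose_two]
    push_cast
    rw [add_sub_cancel_right]
    field_simp
  rw [hY, hT]
  exact chebY_pow_le_diamT_sq hK hKi m

theorem normalizedDiamT_le (hK : IsCompact K) (hKi : K.Infinite) {m : ℕ} (hm : 0 < m)
    {q : ℂ[X]} (hq : q.Monic) (hqm : q.natDegree = m) :
    ∃ F : ℝ, 1 ≤ F ∧ ∀ n, 2 ≤ n → normalizedDiamT K n ≤
      ((n.factorial : ℝ) * F ^ n) ^ ((n.choose 2 : ℝ)⁻¹) * supNormOn K q ^ ((m : ℝ)⁻¹) := by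
  have hQ := supNormOn_pos hK hKi hq.ne_zero
  set t := supNormOn K q ^ ((m : ℝ)⁻¹)
  have ht : 0 < t := Real.rpow_pos_of_pos hQ _
  obtain ⟨R, hR⟩ := hK.isBounded.exists_norm_le
  set G := max 1 (R / t)
  have hKt : ∀ z ∈ K, ‖z‖ ≤ G * t := fun z hz =>
    (hR z hz).trans <| (div_le_iff₀ ht).1 (le_max_right _ _)
  have hqt : ∀ z ∈ K, ‖q.eval z‖ ≤ t ^ m := fun z hz => by
    rw [Real.rpow_inv_natCast_pow hQ.le hm.ne']
    exact norm_eval_le_supNormOn hK hz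
  refine ⟨G ^ m, one_le_pow₀ (le_max_left _ _), fun n hn => ?_⟩
  have hc : n.choose 2 ≠ 0 := (Nat.choose_pos hn).ne'
  calc normalizedDiamT K n
      ≤ ((n.factorial : ℝ) * (G ^ m) ^ n * t ^ n.choose 2) ^ ((n.choose 2 : ℝ)⁻¹) :=
        Real.rpow_le_rpow diamT_nonneg (diamT_le hm hq hqm ht.le (le_max_left _ _) hqt hKt n)
          (by positivity)
    _ = _ := by rw [Real.mul_rpow (by positivity) (by positivity),
        Real.pow_rpow_inv_natCast ht.le hc]

theorem isBoundedUnder_le_normalizedDiamT (hK : IsCompact K) (hKi : K.Infinite) :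
    IsBoundedUnder (· ≤ ·) atTop (normalizedDiamT K) := by
  obtain ⟨F, hF, hle⟩ := normalizedDiamT_le hK hKi one_pos monic_X natDegree_X
  exact ((tendsto_factorial_mul_pow_rpow_inv_choose_two hF).mul_const _).isBoundedUnder_le.mono_le
    (eventually_atTop.2 ⟨2, hle⟩)

theorem limsup_normalizedDiamT_le (hK : IsCompact K) (hKi : K.Infinite) {m : ℕ} (hm : 0 < m)
    {q : ℂ[X]} (hq : q.Monic) (hqm : q.natDegree = m) :
    limsup (normalizedDiamT K) atTop ≤ supNormOn K q ^ ((m : ℝ)⁻¹) := by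
  obtain ⟨F, hF, hle⟩ := normalizedDiamT_le hK hKi hm hq hqm
  exact limsup_le_of_le_mul_of_tendsto_one (isBoundedUnder_of ⟨0, normalizedDiamT_nonneg⟩)
    (tendsto_factorial_mul_pow_rpow_inv_choose_two hF) (eventually_atTop.2 ⟨2, hle⟩)

end asymptotics

/-- For an infinite compact set `K ⊆ ℂ`, the Chebyshev constant
`C(K) = lim_k Y_k(K)^{1/k}` and the transfinite diameter
`T(K) = lim_k T_k(K)^{1/binom(k,2)}` both exist and are equal. -/
theorem chebyshev_constant_eq_transfinite_diameter (K : Set ℂ)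
    (hK_compact : IsCompact K) (hK_inf : K.Infinite) :
    ∃ c : ℝ, 0 ≤ c ∧
      Tendsto (fun k : ℕ => chebY K k ^ ((k : ℝ)⁻¹)) atTop (nhds c) ∧
      Tendsto (fun k : ℕ => diamT K k ^ (((k.choose 2 : ℕ) : ℝ)⁻¹)) atTop (nhds c) := by
  obtain ⟨hdiam, hcheb⟩ := tendsto_limsup_of_limsup_le_of_le_succ
    (isBoundedUnder_le_normalizedDiamT hK_compact hK_inf)
    (isBoundedUnder_of ⟨0, normalizedDiamT_nonneg⟩)
    (eventually_atTop.2 ⟨1, fun m hm => le_normalizedChebY hm fun q hq hqm =>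
      limsup_normalizedDiamT_le hK_compact hK_inf hm hq hqm⟩)
    (eventually_atTop.2 ⟨1, fun m hm =>
      normalizedChebY_le_normalizedDiamT_succ hK_compact hK_inf hm⟩)
  exact ⟨_, ge_of_tendsto' hdiam normalizedDiamT_nonneg, hcheb, hdiam⟩
end

section
/- Let n ≥ 1, let p be a polynomial in n complex variables (an element of MvPolynomial over ℂ), let α ∈ ℕ^n be a multi-index such that the coefficient of the monomial z^α in p equals 1, and let r > 0. Then sup{ |p(z)| : z ∈ ℂ^n, |z_i| ≤ r for all i } ≥ r^{|α|}, where |α| = α_1 + … + α_n; equivalently, there exists z in the closed polydisc of polyradius (r, …, r) with |p(z)| ≥ r^{|α|}. -/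
/-!
Sample `p` on the grid `z = (r ω^{k_1}, …, r ω^{k_n})`, where `ω` is a primitive `N`-th root of
unity with `N` larger than every partial degree of `p`. Twisting by the character
`k ↦ ω^{-⟪α, k⟫}` and averaging over the `N^n` grid points kills every monomial except `z^α`
(orthogonality of characters of `(ℤ/N)^n`), so the average equals `r^{|α|}`. Since the twist has
modulus one, some grid point, which lies on the distinguished boundary of the polydisc, has
`|p(z)| ≥ r^{|α|}`.
-/

open Finset MvPolynomial

namespace IsPrimitiveRoot

variable {K : Type*} [Field K] {ω : K} {N : ℕ}

theorem sum_pow_mul_inv_pow (hω : IsPrimitiveRoot ω N) {a b : ℕ} (ha : a < N) (hb : b < N) :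
    ∑ j : Fin N, (ω ^ a * (ω ^ b)⁻¹) ^ (j : ℕ) = if a = b then (N : K) else 0 := by
  rw [Fin.sum_univ_eq_sum_range (fun j => (ω ^ a * (ω ^ b)⁻¹) ^ j)]
  have hω0 : ω ≠ 0 := hω.ne_zero (by omega)
  split_ifs with hab
  · simp [hab, hω0]
  · have hq1 : ω ^ a * (ω ^ b)⁻¹ ≠ 1 := fun h =>
      hab (hω.pow_inj ha hb (mul_inv_eq_one₀ (pow_ne_zero _ hω0) |>.mp h))
    have hqN : (ω ^ a * (ω ^ b)⁻¹) ^ N = 1 := by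
      rw [mul_pow, inv_pow, ← pow_mul, ← pow_mul, mul_comm a, mul_comm b, pow_mul, pow_mul,
        hω.pow_eq_one, one_pow, one_pow, inv_one, mul_one]
    rw [geom_sum_eq hq1 N, hqN, sub_self, zero_div]

variable {σ : Type*} [Fintype σ] [DecidableEq σ]

theorem sum_prod_pow_mul_inv_pow (hω : IsPrimitiveRoot ω N) {α β : σ →₀ ℕ}
    (hα : ∀ i, α i < N) (hβ : ∀ i, β i < N) :
    ∑ k : σ → Fin N, ∏ i, (ω ^ β i * (ω ^ α i)⁻¹) ^ (k i : ℕ) =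
      if β = α then (N : K) ^ Fintype.card σ else 0 := by
  rw [← Fintype.prod_sum fun i (j : Fin N) => (ω ^ β i * (ω ^ α i)⁻¹) ^ (j : ℕ)]
  simp only [hω.sum_pow_mul_inv_pow (hβ _) (hα _), Fintype.prod_ite_zero, prod_const, card_univ,
    ← DFunLike.ext_iff]

theorem sum_eval_mul_prod_inv_pow (hω : IsPrimitiveRoot ω N) (c : σ → K)
    {p : MvPolynomial σ K} (hp : ∀ i, p.degreeOf i < N) {α : σ →₀ ℕ} (hα : ∀ i, α i < N) :
    ∑ k : σ → Fin N, eval (fun i => c i * ω ^ (k i : ℕ)) p * ∏ i, ((ω ^ α i)⁻¹) ^ (k i : ℕ) =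
      (N : K) ^ Fintype.card σ * ((∏ i, c i ^ α i) * coeff α p) := by
  have hmonomial (k : σ → Fin N) (β : σ →₀ ℕ) :
      (∏ i, (c i * ω ^ (k i : ℕ)) ^ β i) * ∏ i, ((ω ^ α i)⁻¹) ^ (k i : ℕ) =
        (∏ i, c i ^ β i) * ∏ i, (ω ^ β i * (ω ^ α i)⁻¹) ^ (k i : ℕ) := by
    rw [← prod_mul_distrib, ← prod_mul_distrib]
    exact prod_congr rfl fun i _ => by ring
  calc _ = ∑ β ∈ p.support, coeff β p * (∏ i, c i ^ β i) *
        ∑ k : σ → Fin N, ∏ i, (ω ^ β i * (ω ^ α i)⁻¹) ^ (k i : ℕ) := by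
        simp only [eval_eq', sum_mul, mul_assoc, hmonomial, mul_sum]
        exact sum_comm
    _ = ∑ β ∈ p.support, coeff β p * (∏ i, c i ^ β i) *
        if β = α then (N : K) ^ Fintype.card σ else 0 :=
        sum_congr rfl fun β hβ => by
          rw [hω.sum_prod_pow_mul_inv_pow hα fun i => (monomial_le_degreeOf i hβ).trans_lt (hp i)]
    _ = _ := by
      simp only [mul_ite, mul_zero, sum_ite_eq']
      split_ifs with hα0
      · ring
      · rw [notMem_support_iff.1 hα0]; ring

end IsPrimitiveRoot

theorem exists_le_norm_of_card_mul_le_norm_sum_mul {ι E : Type*} [Fintype ι] [Nonempty ι]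
    [SeminormedRing E] (f u : ι → E) (hu : ∀ k, ‖u k‖ ≤ 1) {M : ℝ}
    (h : Fintype.card ι * M ≤ ‖∑ k, f k * u k‖) : ∃ k, M ≤ ‖f k‖ := by
  have hsum : ∑ _k : ι, M ≤ ∑ k, ‖f k‖ := calc
    ∑ _k : ι, M = Fintype.card ι * M := by simp
    _ ≤ ‖∑ k, f k * u k‖ := h
    _ ≤ ∑ k, ‖f k‖ * ‖u k‖ := (norm_sum_le _ _).trans (sum_le_sum fun k _ => norm_mul_le _ _)
    _ ≤ ∑ k, ‖f k‖ := sum_le_sum fun k _ =>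
      mul_le_of_le_one_right (norm_nonneg _) (hu k)
  obtain ⟨k, -, hk⟩ := exists_le_of_sum_le univ_nonempty hsum
  exact ⟨k, hk⟩

theorem sup_polydisc_ge_of_coeff_one_general (n : ℕ)
    (p : MvPolynomial (Fin n) ℂ) (α : Fin n →₀ ℕ)
    (hcoeff : MvPolynomial.coeff α p = 1) (r : ℝ) (hr : 0 < r) :
    ∃ z : Fin n → ℂ, (∀ i, ‖z i‖ ≤ r) ∧
      r ^ (∑ i, α i) ≤ ‖MvPolynomial.eval z p‖ := by
  set N := p.totalDegree + 1
  have hN : N ≠ 0 := p.totalDegree.succ_ne_zero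
  set ω := Complex.exp (2 * Real.pi * Complex.I / N)
  have hω : IsPrimitiveRoot ω N := Complex.isPrimitiveRoot_exp N hN
  have hωnorm : ‖ω‖ = 1 := hω.norm'_eq_one hN
  have hdeg : ∀ i, p.degreeOf i < N := fun i => Nat.lt_succ_of_le (degreeOf_le_totalDegree p i)
  have hα : ∀ i, α i < N := fun i =>
    (monomial_le_degreeOf i (mem_support_iff.2 (by simp [hcoeff]))).trans_lt (hdeg i)
  set z : (Fin n → Fin N) → Fin n → ℂ := fun k i => r * ω ^ (k i : ℕ)
  have hmean := hω.sum_eval_mul_prod_inv_pow (fun _ => (r : ℂ)) hdeg hα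
  obtain ⟨k, hk⟩ := exists_le_norm_of_card_mul_le_norm_sum_mul (M := r ^ ∑ i, α i)
    (fun k => eval (z k) p) (fun k => ∏ i, ((ω ^ α i)⁻¹) ^ (k i : ℕ))
    (fun k => by simp [hωnorm]) (by
      rw [hmean, hcoeff, prod_pow_eq_pow_sum]
      simp [abs_of_pos hr])
  exact ⟨z k, fun i => by simp [z, hωnorm, abs_of_pos hr], hk⟩

/-- If the coefficient of `z^α` in a multivariate polynomial `p` over `ℂ` equals `1`,
then the supremum of `|p|` over the closed polydisc of polyradius `(r,…,r)` is at least
`r^{|α|}`: there is a point `z` of the polydisc with `|p(z)| ≥ r^{|α|}`. -/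
theorem sup_polydisc_ge_of_coeff_one (n : ℕ) (hn : 1 ≤ n)
    (p : MvPolynomial (Fin n) ℂ) (α : Fin n →₀ ℕ)
    (hcoeff : MvPolynomial.coeff α p = 1) (r : ℝ) (hr : 0 < r) :
    ∃ z : Fin n → ℂ, (∀ i, ‖z i‖ ≤ r) ∧
      r ^ (∑ i, α i) ≤ ‖MvPolynomial.eval z p‖ :=
  sup_polydisc_ge_of_coeff_one_general n p α hcoeff r hr
end
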